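/- Let (D, B_0) be a dimaze. A set B of vertices is linkable onto B_0 (by disjoint directed paths with terminal vertex set exactly B_0) if and only if in the converted bimaze (D, B_0)^⋆ the set V \ B is m_0-matchable onto (V \ B_0)^⋆. -/

import Mathlib

open Set


/-- A finite directed path/walk or a ray, encoded by a vertex function and a length:
the number of edges, `⊤` for a ray. Only indices `≤ len` are meaningful. -/
structure DiWalk (V : Type*) where
  vtx : ℕ → V
  len : ℕ∞

namespace DiWalk

variable {V : Type*} (w : DiWalk V)

/-- The vertices of the walk. -/
def support : Set V := {v | ∃ i : ℕ, (i : ℕ∞) ≤ w.len ∧ w.vtx i = v}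

/-- The directed edges of the walk. -/
def edges : Set (V × V) := {e | ∃ i : ℕ, (i : ℕ∞) + 1 ≤ w.len ∧ e = (w.vtx i, w.vtx (i + 1))}

/-- The initial vertex. -/
def Ini : V := w.vtx 0

/-- The terminal vertex (meaningful for finite walks). -/
def Ter : V := w.vtx w.len.toNat

/-- `w` is a ray, i.e. one-way infinite. -/
def IsRay : Prop := w.len = ⊤

/-- `w` is a (finite) directed path or a directed ray in the digraph `D`: consecutive
vertices are joined by edges of `D` and no vertex is repeated. -/
def IsPathIn (D : V → V → Prop) : Prop :=
  (∀ i : ℕ, (i : ℕ∞) + 1 ≤ w.len → D (w.vtx i) (w.vtx (i + 1))) ∧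
  (∀ i j : ℕ, (i : ℕ∞) ≤ w.len → (j : ℕ∞) ≤ w.len → w.vtx i = w.vtx j → i = j)

end DiWalk

variable {V : Type*}

/-- The vertex set of a family of walks. -/
def VSet (Q : Set (DiWalk V)) : Set V := ⋃ q ∈ Q, q.support

/-- The edge set of a family of walks. -/
def ESet (Q : Set (DiWalk V)) : Set (V × V) := ⋃ q ∈ Q, q.edges

/-- The set of initial vertices of a family of walks. -/
def IniSet (Q : Set (DiWalk V)) : Set V := DiWalk.Ini '' Q

/-- The set of terminal vertices of the finite members of a family of walks. -/
def TerSet (Q : Set (DiWalk V)) : Set V := {v | ∃ q ∈ Q, ¬ q.IsRay ∧ q.Ter = v}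

/-- The members of `Q` are pairwise vertex-disjoint. -/
def PairwiseDisjointWalks (Q : Set (DiWalk V)) : Prop :=
  ∀ p ∈ Q, ∀ q ∈ Q, p ≠ q → Disjoint p.support q.support

/-- `Q` is a set of pairwise disjoint directed paths or rays in `D`. -/
def IsPathSystem (D : V → V → Prop) (Q : Set (DiWalk V)) : Prop :=
  (∀ q ∈ Q, q.IsPathIn D) ∧ PairwiseDisjointWalks Q

/-- A linkage in the dimaze `(D, B0)`: a set of pairwise disjoint finite directed paths
ending in `B0`. -/
def IsLinkage (D : V → V → Prop) (B0 : Set V) (Q : Set (DiWalk V)) : Prop :=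
  IsPathSystem D Q ∧ ∀ q ∈ Q, ¬ q.IsRay ∧ q.Ter ∈ B0

/-- `I` is linkable to `B0` in `(D, B0)`. -/
def Linkable (D : V → V → Prop) (B0 : Set V) (I : Set V) : Prop :=
  ∃ Q, IsLinkage D B0 Q ∧ IniSet Q = I

/-- `I` is linkable onto `B0`: some linkage from `I` has terminal vertex set exactly `B0`. -/
def LinkableOnto (D : V → V → Prop) (B0 : Set V) (I : Set V) : Prop :=
  ∃ Q, IsLinkage D B0 Q ∧ IniSet Q = I ∧ TerSet Q = B0

/-- `B0` is a set of sinks of `D`. -/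
def IsDimaze (D : V → V → Prop) (B0 : Set V) : Prop := ∀ b ∈ B0, ∀ v, ¬ D b v

/-- `v` is the centre of a linking fan: infinitely many non-trivial directed paths to `B0`
from `v`, pairwise meeting only in `v`. -/
def IsFanCentre (D : V → V → Prop) (B0 : Set V) (v : V) : Prop :=
  ∃ P : Set (DiWalk V), P.Infinite ∧
    (∀ p ∈ P, p.IsPathIn D ∧ ¬ p.IsRay ∧ 1 ≤ p.len ∧ p.Ini = v ∧ p.Ter ∈ B0) ∧
    (∀ p ∈ P, ∀ q ∈ P, p ≠ q → p.support ∩ q.support ⊆ {v})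

/-- The ray `R` is the spine of an outgoing comb with teeth ending in `B0`: there are
infinitely many pairwise disjoint non-trivial paths from distinct vertices of `R` to `B0`,
each meeting `R` exactly in its initial vertex. -/
def IsSpine (D : V → V → Prop) (B0 : Set V) (R : DiWalk V) : Prop :=
  R.IsPathIn D ∧ R.IsRay ∧
  ∃ P : Set (DiWalk V), P.Infinite ∧
    (∀ p ∈ P, p.IsPathIn D ∧ ¬ p.IsRay ∧ 1 ≤ p.len ∧ p.Ini ∈ R.support ∧ p.Ter ∈ B0 ∧
      p.support ∩ R.support = {p.Ini}) ∧
    PairwiseDisjointWalks P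

/-- `(D, B0)` contains no subdivision of an outgoing comb. -/
def COFree (D : V → V → Prop) (B0 : Set V) : Prop := ¬ ∃ R, IsSpine D B0 R

/-- `(D, B0)` contains no subdivision of a linking fan. -/
def FanFree (D : V → V → Prop) (B0 : Set V) : Prop := ¬ ∃ v, IsFanCentre D B0 v

/-- A topological path in `(D, B0)`. -/
def IsTopPath (D : V → V → Prop) (B0 : Set V) (w : DiWalk V) : Prop :=
  w.IsPathIn D ∧
    ((¬ w.IsRay ∧ w.Ter ∈ B0) ∨ (¬ w.IsRay ∧ IsFanCentre D B0 w.Ter) ∨ IsSpine D B0 w)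

/-- `I` is topologically linkable in `(D, B0)`. -/
def TopLinkable (D : V → V → Prop) (B0 : Set V) (I : Set V) : Prop :=
  ∃ Q : Set (DiWalk V), (∀ q ∈ Q, IsTopPath D B0 q) ∧ PairwiseDisjointWalks Q ∧ IniSet Q = I
section Bipartite

variable {V W : Type*}

/-- `m` is a matching in the bipartite graph with edge set `E ⊆ V × W`. -/
def IsBipMatching (E m : Set (V × W)) : Prop :=
  m ⊆ E ∧ ∀ p ∈ m, ∀ q ∈ m, (p.1 = q.1 ∨ p.2 = q.2) → p = q

/-- `I ⊆ V` is matchable in the bipartite graph with edge set `E`. -/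
def Matchable (E : Set (V × W)) (I : Set V) : Prop :=
  ∃ m, IsBipMatching E m ∧ Prod.fst '' m = I

/-- One step along an edge of `F` in the bipartite graph, on vertex type `V ⊕ W`. -/
def bipStep (F : Set (V × W)) : (V ⊕ W) → (V ⊕ W) → Prop := fun a b =>
  match a, b with
  | Sum.inl v, Sum.inr w => (v, w) ∈ F
  | Sum.inr w, Sum.inl v => (v, w) ∈ F
  | _, _ => False

/-- Every connected component of the bipartite graph with edge set `F` is finite. -/
def FiniteComponents (F : Set (V × W)) : Prop :=
  ∀ x : V ⊕ W, {y | Relation.ReflTransGen (bipStep F) x y}.Finite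

/-- `m` is an `m0`-matching: a matching such that every component of `m0 ∪ m` is finite. -/
def IsM0Matching (E m0 m : Set (V × W)) : Prop :=
  IsBipMatching E m ∧ FiniteComponents (m0 ∪ m)

/-- `I` is `m0`-matchable. -/
def M0Matchable (E m0 : Set (V × W)) (I : Set V) : Prop :=
  ∃ m, IsM0Matching E m0 m ∧ Prod.fst '' m = I

/-- `I` is `m0`-matchable onto `W'`. -/
def M0MatchableOnto (E m0 : Set (V × W)) (I : Set V) (W' : Set W) : Prop :=
  ∃ m, IsM0Matching E m0 m ∧ Prod.fst '' m = I ∧ Prod.snd '' m = W'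

end Bipartite

section Star

variable {V : Type*}

/-- The edge set of the converted bimaze of the dimaze `(D, B0)`: the right class is
`{v ∣ v ∉ B0}` (representing `(V \ B0)⋆`) and the edges are the identity matching
together with `v u⋆` for every edge `(u, v)` of `D`. -/
def starEdges (D : V → V → Prop) (B0 : Set V) : Set (V × V) :=
  {p | (p.1 = p.2 ∧ p.2 ∉ B0) ∨ (D p.2 p.1 ∧ p.2 ∉ B0)}

/-- The identity matching of the converted bimaze. -/
def starM0 (B0 : Set V) : Set (V × V) := {p | p.1 = p.2 ∧ p.1 ∉ B0}

end Star


/-!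
Both sides amount to the same object: a bi-unique "successor" relation `r` on `V` whose
sources are `B`, whose sinks are `B0`, whose steps are loops or edges of `D`, and whose
connected components are finite.

A linkage gives `r` by following its edges and putting a loop at every vertex it misses; an
`m0`-matching `m` gives `r x y ↔ y x⋆ ∈ m`, and identifying `x` with `x⋆` turns the components
of `m0 ∪ m` into those of `r`. Conversely `m` is read off from `r` in the same way, and the
paths are the maximal `r`-chains starting at the sources: finiteness of the components forces
them to be injective and to end in a sink, and every sink is reached because the backward chain
from it must end in a source.
-/

open Function Relation Relator

section Relations

variable {α : Type*} {r : α → α → Prop} {C : Set α} {x y : α}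

lemma Relation.EqvGen.mem_iff_mem (hC : ∀ a b, r a b → (a ∈ C ↔ b ∈ C)) (h : EqvGen r x y) :
    x ∈ C ↔ y ∈ C := by
  induction h with
  | rel a b hab => exact hC a b hab
  | refl => rfl
  | symm _ _ _ ih => exact ih.symm
  | trans _ _ _ _ _ ih₁ ih₂ => exact ih₁.trans ih₂

lemma setOf_eqvGen_subset (hC : ∀ a b, r a b → (a ∈ C ↔ b ∈ C)) (hx : x ∈ C) :
    {y | EqvGen r x y} ⊆ C :=
  fun _ hy => (hy.mem_iff_mem hC).1 hx

lemma chain_index_eq_of_leftUnique (hr : LeftUnique r) {f g : ℕ → α} {m n : ℕ}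
    (hf : ∀ i < m, r (f i) (f (i + 1))) (hg : ∀ j < n, r (g j) (g (j + 1)))
    (hf₀ : ∀ a, ¬ r a (f 0)) (hg₀ : ∀ a, ¬ r a (g 0)) :
    ∀ i ≤ m, ∀ j ≤ n, f i = g j → i = j ∧ f 0 = g 0 := by
  intro i
  induction i with
  | zero =>
    rintro - (_ | j) hj h
    · exact ⟨rfl, h⟩
    · exact (hf₀ _ (h ▸ hg j hj)).elim
  | succ i ih =>
    rintro hi (_ | j) hj h
    · exact (hg₀ _ (h ▸ hf i hi)).elim
    · obtain ⟨rfl, h₀⟩ := ih (by omega) j (by omega) (hr (h ▸ hf i hi) (hg j hj))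
      exact ⟨rfl, h₀⟩

open Classical in
/-- An `r`-successor of `x`; junk value `x` if there is none. -/
noncomputable def succOf (r : α → α → Prop) (x : α) : α :=
  if h : ∃ y, r x y then h.choose else x

lemma succOf_spec (h : ∃ y, r x y) : r x (succOf r x) := by
  rw [succOf, dif_pos h]
  exact h.choose_spec

lemma succOf_eq (hr : RightUnique r) (h : r x y) : succOf r x = y :=
  hr (succOf_spec ⟨y, h⟩) h

/-- Junk value `0` if the iterates of `b` never hit `T`. -/
noncomputable def chainLen (r : α → α → Prop) (T : Set α) (b : α) : ℕ :=
  sInf {n | (succOf r)^[n] b ∈ T}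

noncomputable def chainWalk (r : α → α → Prop) (T : Set α) (b : α) : DiWalk α :=
  ⟨fun i => (succOf r)^[i] b, chainLen r T b⟩

@[simp]
lemma len_chainWalk {T : Set α} {b : α} : (chainWalk r T b).len = chainLen r T b :=
  rfl

lemma ter_chainWalk {T : Set α} {b : α} :
    (chainWalk r T b).Ter = (succOf r)^[chainLen r T b] b := by
  rw [DiWalk.Ter, len_chainWalk, ENat.toNat_natCast]
  rfl

end Relations

/-- `r` is a bijection from the complement of `T` onto the complement of `S` whose graph has
finite components, so that it is a disjoint union of finite paths from `S` to `T` and of cycles. -/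
structure IsLinkingRelation {α : Type*} (S T : Set α) (r : α → α → Prop) : Prop where
  biUnique : BiUnique r
  finite_eqvGen : ∀ x, {y | EqvGen r x y}.Finite
  mem_source_iff : ∀ y, y ∈ S ↔ ∀ x, ¬ r x y
  mem_sink_iff : ∀ x, x ∈ T ↔ ∀ y, ¬ r x y

namespace IsLinkingRelation

variable {α : Type*} {S T : Set α} {r : α → α → Prop} (hr : IsLinkingRelation S T r)
  {b v : α}
include hr

lemma swap : IsLinkingRelation T S (swap r) where
  biUnique := ⟨fun _ _ _ h h' => hr.biUnique.2 h h', fun _ _ _ h h' => hr.biUnique.1 h h'⟩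
  finite_eqvGen x := (hr.finite_eqvGen x).subset fun y hy =>
    EqvGen.eqvGen_le (r := Function.swap r) (fun a b h => EqvGen.symm _ _ (EqvGen.rel b a h)) x y hy
  mem_source_iff := hr.mem_sink_iff
  mem_sink_iff := hr.mem_source_iff

lemma rel_succOf (hv : v ∉ T) : r v (succOf r v) :=
  succOf_spec (not_forall_not.1 ((hr.mem_sink_iff v).not.1 hv))

lemma rel_iterate_of_lt_chainLen {i : ℕ} (hi : i < chainLen r T b) :
    r ((succOf r)^[i] b) ((succOf r)^[i + 1] b) := by
  rw [iterate_succ_apply']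
  exact hr.rel_succOf (Nat.notMem_of_lt_sInf hi)

lemma exists_iterate_mem_sink (hb : b ∈ S) : ∃ n, (succOf r)^[n] b ∈ T := by
  by_contra! hT
  have hchain : ∀ i, r ((succOf r)^[i] b) ((succOf r)^[i + 1] b) := fun i => by
    rw [iterate_succ_apply']
    exact hr.rel_succOf (hT i)
  have hb₀ := (hr.mem_source_iff b).1 hb
  have hinj : Injective fun i => (succOf r)^[i] b := fun i j hij =>
    (chain_index_eq_of_leftUnique hr.biUnique.1 (fun k _ => hchain k) (fun k _ => hchain k)
      hb₀ hb₀ i le_rfl j le_rfl hij).1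
  have hclass : ∀ i, EqvGen r b ((succOf r)^[i] b) := fun i => by
    induction i with
    | zero => exact EqvGen.refl b
    | succ i ih => exact EqvGen.trans _ _ _ ih (EqvGen.rel _ _ (hchain i))
  exact infinite_range_of_injective hinj
    ((hr.finite_eqvGen b).subset (range_subset_iff.2 hclass))

lemma ter_chainWalk_mem (hb : b ∈ S) : (chainWalk r T b).Ter ∈ T := by
  rw [ter_chainWalk]
  exact Nat.sInf_mem (hr.exists_iterate_mem_sink hb)

lemma index_eq_of_vtx_eq {b' : α} (hb : b ∈ S) (hb' : b' ∈ S) {i j : ℕ}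
    (hi : (i : ℕ∞) ≤ (chainWalk r T b).len) (hj : (j : ℕ∞) ≤ (chainWalk r T b').len)
    (h : (chainWalk r T b).vtx i = (chainWalk r T b').vtx j) : i = j ∧ b = b' :=
  chain_index_eq_of_leftUnique hr.biUnique.1 (fun _ => hr.rel_iterate_of_lt_chainLen)
    (fun _ => hr.rel_iterate_of_lt_chainLen) ((hr.mem_source_iff b).1 hb)
    ((hr.mem_source_iff b').1 hb') i (by simpa using hi) j (by simpa using hj) h

lemma isPathIn_chainWalk (hb : b ∈ S) : (chainWalk r T b).IsPathIn r :=
  ⟨fun _ hi => hr.rel_iterate_of_lt_chainLen (by simpa [ENat.add_one_le_iff] using hi),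
    fun _ _ hi hj h => (hr.index_eq_of_vtx_eq hb hb hi hj h).1⟩

lemma ter_chainWalk_of_chain {f : ℕ → α} {n : ℕ} (hf : ∀ i < n, r (f i) (f (i + 1)))
    (hn : f n ∈ T) : (chainWalk r T (f 0)).Ter = f n := by
  have hiter : ∀ i ≤ n, (succOf r)^[i] (f 0) = f i := fun i => by
    induction i with
    | zero => exact fun _ => rfl
    | succ i ih =>
      intro hi
      rw [iterate_succ_apply', ih (by omega), succOf_eq hr.biUnique.2 (hf i (by omega))]
  have hn' : (succOf r)^[n] (f 0) ∈ T := by rwa [hiter n le_rfl]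
  have hlen : chainLen r T (f 0) = n := by
    refine le_antisymm (Nat.sInf_le hn') (not_lt.1 fun hlt => ?_)
    have hmem : (succOf r)^[chainLen r T (f 0)] (f 0) ∈ T :=
      Nat.sInf_mem (s := {k | (succOf r)^[k] (f 0) ∈ T}) ⟨n, hn'⟩
    rw [hiter _ hlt.le] at hmem
    exact (hr.mem_sink_iff _).1 hmem _ (hf _ hlt)
  rw [ter_chainWalk, hlen, hiter n le_rfl]

/-- Reverse the backward chain from `v`, which ends in a source. -/
lemma exists_ter_chainWalk_eq (hv : v ∈ T) : ∃ b ∈ S, (chainWalk r T b).Ter = v := by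
  set n := chainLen (Function.swap r) S v
  set g := (chainWalk (Function.swap r) S v).vtx
  have hchain : ∀ i < n, r (g (n - i)) (g (n - (i + 1))) := fun i hi => by
    have h := hr.swap.rel_iterate_of_lt_chainLen (b := v) (i := n - (i + 1)) (by omega)
    rwa [show n - (i + 1) + 1 = n - i by omega] at h
  refine ⟨g n, ?_, ?_⟩
  · have h := hr.swap.ter_chainWalk_mem hv
    rwa [ter_chainWalk] at h
  · have h := hr.ter_chainWalk_of_chain hchain (by rw [Nat.sub_self]; exact hv)
    rwa [Nat.sub_zero, Nat.sub_self] at h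

theorem linkableOnto : LinkableOnto r T S := by
  refine ⟨chainWalk r T '' S, ⟨⟨?_, ?_⟩, ?_⟩, ?_, ?_⟩
  · rintro _ ⟨b, hb, rfl⟩
    exact hr.isPathIn_chainWalk hb
  · rintro _ ⟨b, hb, rfl⟩ _ ⟨b', hb', rfl⟩ hne
    refine disjoint_left.2 fun _ ⟨i, hi, hvi⟩ ⟨j, hj, hvj⟩ => hne ?_
    rw [(hr.index_eq_of_vtx_eq hb hb' hi hj (hvi.trans hvj.symm)).2]
  · rintro _ ⟨b, hb, rfl⟩
    exact ⟨ENat.natCast_ne_top _, hr.ter_chainWalk_mem hb⟩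
  · rw [IniSet, image_image]
    exact image_id' S
  · ext v
    constructor
    · rintro ⟨_, ⟨b, hb, rfl⟩, -, rfl⟩
      exact hr.ter_chainWalk_mem hb
    · intro hv
      obtain ⟨b, hb, hbv⟩ := hr.exists_ter_chainWalk_eq hv
      exact ⟨_, ⟨b, hb, rfl⟩, ENat.natCast_ne_top _, hbv⟩

end IsLinkingRelation

section Linkages

variable {D D' : V → V → Prop} {w p q : DiWalk V} {Q : Set (DiWalk V)}
  {e : V × V} {v x y : V}

namespace DiWalk

lemma len_eq_toNat (hw : ¬ w.IsRay) : w.len = w.len.toNat :=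
  (ENat.natCast_toNat hw).symm

lemma ini_mem_support : w.Ini ∈ w.support :=
  ⟨0, by simp, rfl⟩

lemma ter_mem_support (hw : ¬ w.IsRay) : w.Ter ∈ w.support :=
  ⟨_, (len_eq_toNat hw).ge, rfl⟩

lemma support_finite (hw : ¬ w.IsRay) : w.support.Finite :=
  ((finite_Iic w.len.toNat).image w.vtx).subset <| by
    rintro _ ⟨i, hi, rfl⟩
    rw [len_eq_toNat hw, Nat.cast_le] at hi
    exact ⟨i, hi, rfl⟩

lemma fst_mem_support (he : e ∈ w.edges) : e.1 ∈ w.support := by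
  obtain ⟨i, hi, rfl⟩ := he
  exact ⟨i, le_self_add.trans hi, rfl⟩

lemma snd_mem_support (he : e ∈ w.edges) : e.2 ∈ w.support := by
  obtain ⟨i, hi, rfl⟩ := he
  exact ⟨i + 1, by exact_mod_cast hi, rfl⟩

lemma exists_mem_edges_of_ne_ini (hv : v ∈ w.support) (hne : v ≠ w.Ini) :
    ∃ u, (u, v) ∈ w.edges := by
  obtain ⟨_ | i, hi, rfl⟩ := hv
  · exact absurd rfl hne
  · exact ⟨w.vtx i, i, by exact_mod_cast hi, rfl⟩

lemma exists_mem_edges_of_ne_ter (hw : ¬ w.IsRay) (hv : v ∈ w.support) (hne : v ≠ w.Ter) :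
    ∃ u, (v, u) ∈ w.edges := by
  obtain ⟨i, hi, rfl⟩ := hv
  rw [len_eq_toNat hw, Nat.cast_le] at hi
  have hlt : i < w.len.toNat := hi.lt_of_ne fun h => hne (by rw [Ter, h])
  exact ⟨w.vtx (i + 1), i, by rw [len_eq_toNat hw]; exact_mod_cast hlt, rfl⟩

namespace IsPathIn

lemma adj_of_mem_edges (hw : w.IsPathIn D) (he : e ∈ w.edges) : D e.1 e.2 := by
  obtain ⟨i, hi, rfl⟩ := he
  exact hw.1 i hi

lemma snd_ne_ini (hw : w.IsPathIn D) (he : e ∈ w.edges) : e.2 ≠ w.Ini := by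
  obtain ⟨i, hi, rfl⟩ := he
  exact fun h => i.succ_ne_zero (hw.2 _ _ (by exact_mod_cast hi) (by simp) h)

lemma fst_ne_ter (hw : w.IsPathIn D) (hfin : ¬ w.IsRay) (he : e ∈ w.edges) : e.1 ≠ w.Ter := by
  obtain ⟨i, hi, rfl⟩ := he
  intro h
  have hi' := hw.2 _ _ (le_self_add.trans hi) (len_eq_toNat hfin).ge h
  rw [len_eq_toNat hfin, ← hi'] at hi
  exact absurd hi (by norm_cast; omega)

lemma biUnique_edges (hw : w.IsPathIn D) : BiUnique fun x y => (x, y) ∈ w.edges := by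
  constructor
  · rintro a b c ⟨i, hi, hic⟩ ⟨j, hj, hjc⟩
    simp only [Prod.mk.injEq] at hic hjc
    have hij := hw.2 (i + 1) (j + 1) (by exact_mod_cast hi) (by exact_mod_cast hj)
      (hic.2.symm.trans hjc.2)
    rw [hic.1, hjc.1, Nat.succ_injective hij]
  · rintro a b c ⟨i, hi, hib⟩ ⟨j, hj, hjc⟩
    simp only [Prod.mk.injEq] at hib hjc
    have hij := hw.2 i j (le_self_add.trans hi) (le_self_add.trans hj) (hib.1.symm.trans hjc.1)
    rw [hib.2, hjc.2, hij]

lemma mono (hw : w.IsPathIn D) (h : ∀ x y, x ≠ y → D x y → D' x y) : w.IsPathIn D' :=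
  ⟨fun i hi => h _ _ (fun he => i.succ_ne_self
    (hw.2 _ _ (le_self_add.trans hi) (by exact_mod_cast hi) he).symm) (hw.1 i hi), hw.2⟩

end IsPathIn

end DiWalk

open DiWalk

lemma mem_vSet : v ∈ VSet Q ↔ ∃ q ∈ Q, v ∈ q.support := by
  simp [VSet]

lemma mem_eSet : e ∈ ESet Q ↔ ∃ q ∈ Q, e ∈ q.edges := by
  simp [ESet]

lemma PairwiseDisjointWalks.eq_of_mem_support (hQ : PairwiseDisjointWalks Q) (hp : p ∈ Q)
    (hq : q ∈ Q) (hvp : v ∈ p.support) (hvq : v ∈ q.support) : p = q :=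
  by_contra fun hne => disjoint_left.1 (hQ p hp q hq hne) hvp hvq

lemma PairwiseDisjointWalks.mem_support_iff_of_mem_eSet (hQ : PairwiseDisjointWalks Q)
    (hq : q ∈ Q) (he : e ∈ ESet Q) : e.1 ∈ q.support ↔ e.2 ∈ q.support := by
  obtain ⟨p, hp, hep⟩ := mem_eSet.1 he
  constructor
  · intro h
    rw [← hQ.eq_of_mem_support hp hq (fst_mem_support hep) h]
    exact snd_mem_support hep
  · intro h
    rw [← hQ.eq_of_mem_support hp hq (snd_mem_support hep) h]
    exact fst_mem_support hep

lemma IsPathSystem.biUnique_eSet (hQ : IsPathSystem D Q) :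
    BiUnique fun x y => (x, y) ∈ ESet Q := by
  constructor
  · intro a b c ha hb
    obtain ⟨p, hp, hap⟩ := mem_eSet.1 ha
    obtain ⟨q, hq, hbq⟩ := mem_eSet.1 hb
    obtain rfl :=
      hQ.2.eq_of_mem_support (v := c) hp hq (snd_mem_support hap) (snd_mem_support hbq)
    exact (hQ.1 p hp).biUnique_edges.1 hap hbq
  · intro a b c hb hc
    obtain ⟨p, hp, hbp⟩ := mem_eSet.1 hb
    obtain ⟨q, hq, hcq⟩ := mem_eSet.1 hc
    obtain rfl :=
      hQ.2.eq_of_mem_support (v := a) hp hq (fst_mem_support hbp) (fst_mem_support hcq)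
    exact (hQ.1 p hp).biUnique_edges.2 hbp hcq

def linkageSucc (Q : Set (DiWalk V)) (x y : V) : Prop :=
  (x, y) ∈ ESet Q ∨ (x = y ∧ x ∉ VSet Q)

lemma mem_vSet_of_mem_eSet (he : e ∈ ESet Q) : e.1 ∈ VSet Q ∧ e.2 ∈ VSet Q := by
  obtain ⟨q, hq, heq⟩ := mem_eSet.1 he
  exact ⟨mem_vSet.2 ⟨q, hq, fst_mem_support heq⟩, mem_vSet.2 ⟨q, hq, snd_mem_support heq⟩⟩

lemma IsPathSystem.biUnique_linkageSucc (hQ : IsPathSystem D Q) :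
    BiUnique (linkageSucc Q) := by
  constructor
  · rintro a b c (ha | ⟨rfl, ha⟩) (hb | ⟨rfl, hb⟩)
    · exact hQ.biUnique_eSet.1 ha hb
    · exact absurd (mem_vSet_of_mem_eSet ha).2 hb
    · exact absurd (mem_vSet_of_mem_eSet hb).2 ha
    · rfl
  · rintro a b c (hb | ⟨rfl, ha⟩) (hc | ⟨rfl, ha'⟩)
    · exact hQ.biUnique_eSet.2 hb hc
    · exact absurd (mem_vSet_of_mem_eSet hb).1 ha'
    · exact absurd (mem_vSet_of_mem_eSet hc).1 ha
    · rfl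

lemma mem_iniSet_iff_forall_not_linkageSucc (hQ : IsPathSystem D Q) :
    y ∈ IniSet Q ↔ ∀ x, ¬ linkageSucc Q x y := by
  constructor
  · rintro ⟨q, hq, rfl⟩ x (hx | ⟨rfl, hx⟩)
    · obtain ⟨p, hp, hxp⟩ := mem_eSet.1 hx
      obtain rfl := hQ.2.eq_of_mem_support hp hq (snd_mem_support hxp) ini_mem_support
      exact (hQ.1 p hp).snd_ne_ini hxp rfl
    · exact hx (mem_vSet.2 ⟨q, hq, ini_mem_support⟩)
  · intro h
    by_contra hy
    by_cases hyQ : y ∈ VSet Q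
    · obtain ⟨q, hq, hyq⟩ := mem_vSet.1 hyQ
      obtain ⟨x, hx⟩ := exists_mem_edges_of_ne_ini hyq fun h' => hy ⟨q, hq, h'.symm⟩
      exact h x (Or.inl (mem_eSet.2 ⟨q, hq, hx⟩))
    · exact h y (Or.inr ⟨rfl, hyQ⟩)

lemma mem_terSet_iff_forall_not_linkageSucc (hQ : IsPathSystem D Q)
    (hfin : ∀ q ∈ Q, ¬ q.IsRay) : x ∈ TerSet Q ↔ ∀ y, ¬ linkageSucc Q x y := by
  constructor
  · rintro ⟨q, hq, -, rfl⟩ y (hy | ⟨rfl, hy⟩)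
    · obtain ⟨p, hp, hyp⟩ := mem_eSet.1 hy
      obtain rfl :=
        hQ.2.eq_of_mem_support hp hq (fst_mem_support hyp) (ter_mem_support (hfin q hq))
      exact (hQ.1 p hp).fst_ne_ter (hfin p hp) hyp rfl
    · exact hy (mem_vSet.2 ⟨q, hq, ter_mem_support (hfin q hq)⟩)
  · intro h
    by_contra hx
    by_cases hxQ : x ∈ VSet Q
    · obtain ⟨q, hq, hxq⟩ := mem_vSet.1 hxQ
      obtain ⟨y, hy⟩ := exists_mem_edges_of_ne_ter (hfin q hq) hxq
        fun h' => hx ⟨q, hq, hfin q hq, h'.symm⟩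
      exact h y (Or.inl (mem_eSet.2 ⟨q, hq, hy⟩))
    · exact h x (Or.inr ⟨rfl, hxQ⟩)

lemma finite_eqvGen_linkageSucc (hQ : PairwiseDisjointWalks Q) (hfin : ∀ q ∈ Q, ¬ q.IsRay)
    (x : V) : {y | EqvGen (linkageSucc Q) x y}.Finite := by
  by_cases hx : x ∈ VSet Q
  · obtain ⟨q, hq, hxq⟩ := mem_vSet.1 hx
    refine (support_finite (hfin q hq)).subset (setOf_eqvGen_subset ?_ hxq)
    rintro a b (hab | ⟨rfl, -⟩)
    · exact hQ.mem_support_iff_of_mem_eSet hq hab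
    · rfl
  · refine (finite_singleton x).subset (setOf_eqvGen_subset ?_ rfl)
    rintro a b (hab | ⟨rfl, -⟩)
    · have ⟨ha, hb⟩ := mem_vSet_of_mem_eSet hab
      exact iff_of_false (fun h => hx (h ▸ ha)) (fun h => hx (h ▸ hb))
    · rfl

lemma LinkableOnto.exists_isLinkingRelation {S T : Set V} (h : LinkableOnto D T S) :
    ∃ r, IsLinkingRelation S T r ∧ ∀ x y, r x y → x = y ∨ D x y := by
  obtain ⟨Q, ⟨hQ, hQT⟩, rfl, rfl⟩ := h
  have hfin : ∀ q ∈ Q, ¬ q.IsRay := fun q hq => (hQT q hq).1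
  refine ⟨linkageSucc Q, ⟨hQ.biUnique_linkageSucc, finite_eqvGen_linkageSucc hQ.2 hfin,
    fun _ => mem_iniSet_iff_forall_not_linkageSucc hQ,
    fun _ => mem_terSet_iff_forall_not_linkageSucc hQ hfin⟩, ?_⟩
  rintro x y (hxy | ⟨rfl, -⟩)
  · obtain ⟨q, hq, hxyq⟩ := mem_eSet.1 hxy
    exact Or.inr ((hQ.1 q hq).adj_of_mem_edges hxyq)
  · exact Or.inl rfl

lemma LinkableOnto.mono {S T : Set V} (h : LinkableOnto D T S)
    (hDD' : ∀ x y, x ≠ y → D x y → D' x y) : LinkableOnto D' T S := by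
  obtain ⟨Q, ⟨⟨hpath, hdisj⟩, hQT⟩, hini, hter⟩ := h
  exact ⟨Q, ⟨⟨fun q hq => (hpath q hq).mono hDD', hdisj⟩, hQT⟩, hini, hter⟩

end Linkages

section Matchings

variable {D : V → V → Prop} {S T : Set V}

lemma bipStep_inl_inr {W : Type*} {F : Set (V × W)} {v : V} {w : W} (h : (v, w) ∈ F) :
    bipStep F (.inl v) (.inr w) :=
  h

lemma bipStep_inr_inl {W : Type*} {F : Set (V × W)} {v : V} {w : W} (h : (v, w) ∈ F) :
    bipStep F (.inr w) (.inl v) :=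
  h

lemma finiteComponents_of_finite_closed {F : Set (V × V)}
    (h : ∀ x, ∃ C : Set V, C.Finite ∧ x ∈ C ∧ ∀ p ∈ F, (p.1 ∈ C ↔ p.2 ∈ C)) :
    FiniteComponents F := by
  intro z
  obtain ⟨C, hC, hzC, hF⟩ := h (Sum.elim id id z)
  refine ((hC.image Sum.inl).union (hC.image Sum.inr)).subset fun y hy => ?_
  have hclosed : ∀ a b, bipStep F a b →
      (a ∈ Sum.elim id id ⁻¹' C ↔ b ∈ Sum.elim id id ⁻¹' C) := by
    rintro (a | a) (b | b) hab
    · exact hab.elim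
    · exact hF _ hab
    · exact (hF _ hab).symm
    · exact hab.elim
  have hy : Sum.elim id id y ∈ C :=
    ((EqvGen.reflTransGen_le_eqvGen _ _ _ hy).mem_iff_mem hclosed).1 hzC
  cases y with
  | inl v => exact Or.inl ⟨v, hy, rfl⟩
  | inr v => exact Or.inr ⟨v, hy, rfl⟩

lemma IsLinkingRelation.m0MatchableOnto {r : V → V → Prop} (hr : IsLinkingRelation S T r)
    (hrD : ∀ x y, r x y → x = y ∨ D x y) :
    M0MatchableOnto (starEdges D T) (starM0 T) (univ \ S) {v | v ∉ T} := by
  have hT : ∀ {x y}, r x y → x ∉ T := fun hxy hx => (hr.mem_sink_iff _).1 hx _ hxy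
  refine ⟨{p | r p.2 p.1}, ⟨⟨?_, ?_⟩, ?_⟩, ?_, ?_⟩
  · rintro ⟨y, x⟩ hxy
    rcases hrD x y hxy with rfl | hD
    · exact Or.inl ⟨rfl, hT hxy⟩
    · exact Or.inr ⟨hD, hT hxy⟩
  · rintro ⟨y, x⟩ hxy ⟨y', x'⟩ hxy' (h | h) <;> simp only at h <;> subst h
    · rw [hr.biUnique.1 (show r x y from hxy) (show r x' y from hxy')]
    · rw [hr.biUnique.2 (show r x y from hxy) (show r x y' from hxy')]
  · refine finiteComponents_of_finite_closed fun x =>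
      ⟨_, hr.finite_eqvGen x, EqvGen.refl x, ?_⟩
    rintro ⟨y, x'⟩ (⟨h, -⟩ | h)
    · simp only at h ⊢
      rw [h]
    · exact ⟨fun h' => h'.trans _ _ _ (EqvGen.symm _ _ (EqvGen.rel _ _ h)),
        fun h' => h'.trans _ _ _ (EqvGen.rel _ _ h)⟩
  · ext y
    simp [hr.mem_source_iff]
  · ext x
    simp [hr.mem_sink_iff]

lemma M0MatchableOnto.exists_isLinkingRelation
    (h : M0MatchableOnto (starEdges D T) (starM0 T) (univ \ S) {v | v ∉ T}) :
    ∃ r, IsLinkingRelation S T r ∧ ∀ x y, r x y → x = y ∨ D x y := by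
  obtain ⟨m, ⟨⟨hmE, hm⟩, hcomp⟩, hfst, hsnd⟩ := h
  have hS : ∀ y, y ∈ S ↔ ∀ x, (y, x) ∉ m := fun y => by
    simpa using (Set.ext_iff.1 hfst y).not.symm
  have hT : ∀ x, x ∈ T ↔ ∀ y, (y, x) ∉ m := fun x => by
    simpa using (Set.ext_iff.1 hsnd x).not.symm
  refine ⟨fun x y => (y, x) ∈ m, ⟨⟨fun a b c ha hb => ?_, fun a b c ha hb => ?_⟩, fun x => ?_,
    hS, hT⟩, fun x y hxy => ?_⟩
  · exact congrArg Prod.snd (hm _ ha _ hb (Or.inl rfl))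
  · exact congrArg Prod.fst (hm _ ha _ hb (Or.inr rfl))
  · -- an `r`-step `a → b` is the walk `a, a⋆, b` in `m0 ∪ m`, and back
    have hstep : ∀ a b, (b, a) ∈ m →
        (ReflTransGen (bipStep (starM0 T ∪ m)) (.inl x) (.inl a) ↔
          ReflTransGen (bipStep (starM0 T ∪ m)) (.inl x) (.inl b)) := by
      intro a b hba
      have haa : (a, a) ∈ starM0 T ∪ m := Or.inl ⟨rfl, fun ha => (hT a).1 ha b hba⟩
      have hba' : (b, a) ∈ starM0 T ∪ m := Or.inr hba
      exact ⟨fun h => (h.tail (bipStep_inl_inr haa)).tail (bipStep_inr_inl hba'),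
        fun h => (h.tail (bipStep_inl_inr hba')).tail (bipStep_inr_inl haa)⟩
    exact ((hcomp (.inl x)).preimage Sum.inl_injective.injOn).subset
      (setOf_eqvGen_subset (C := Sum.inl ⁻¹' _) hstep ReflTransGen.refl)
  · rcases hmE hxy with ⟨h, -⟩ | ⟨h, -⟩
    · exact Or.inl h.symm
    · exact Or.inr h

end Matchings

theorem linkable_onto_iff_m0_matchable_onto_general {V : Type*} (D : V → V → Prop) (B0 : Set V)
    (B : Set V) :
    LinkableOnto D B0 B ↔
      M0MatchableOnto (starEdges D B0) (starM0 B0) (Set.univ \ B) {v | v ∉ B0} := by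
  constructor
  · intro h
    obtain ⟨r, hr, hrD⟩ := h.exists_isLinkingRelation
    exact hr.m0MatchableOnto hrD
  · intro h
    obtain ⟨r, hr, hrD⟩ := h.exists_isLinkingRelation
    exact hr.linkableOnto.mono fun x y hne hxy => (hrD x y hxy).resolve_left hne

theorem linkable_onto_iff_m0_matchable_onto {V : Type*} (D : V → V → Prop) (B0 : Set V)
    (hDim : IsDimaze D B0) (B : Set V) :
    LinkableOnto D B0 B ↔
      M0MatchableOnto (starEdges D B0) (starM0 B0) (Set.univ \ B) {v | v ∉ B0} :=
  linkable_onto_iff_m0_matchable_onto_general D B0 B
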